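/- arXiv:1208.2112 — 2 statements merged into one kernel-verified Lean document; each statement's English description precedes it below -/
import Mathlib

section
/- Policy improvement: let P and P' be real n×n row-stochastic matrices, γ ∈ [0,1), and r ∈ ℝⁿ. Let v = (I − γP)⁻¹ r. If r + γ P' v ≥ v componentwise, then (I − γP')⁻¹ r ≥ v componentwise. -/
open Matrix

/-!
For a row-stochastic `M` and `0 ≤ γ < 1`, the operator `u ↦ γ • M *ᵥ u` satisfies a minimum
principle: `γ • M *ᵥ u ≤ u` forces `u ≥ 0`, because at a minimising coordinate `k` the average
`(M *ᵥ u) k` is at least `u k`, so `γ • u k ≤ u k`. This makes `1 - γ • M` invertible with a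
monotone inverse. If `w = (1 - γ • M)⁻¹ *ᵥ r`, then `w = r + γ • M *ᵥ w`, and subtracting this
from `v ≤ r + γ • M *ᵥ v` gives `γ • M *ᵥ (w - v) ≤ w - v`, hence `v ≤ w`.
-/

namespace Matrix

variable {ι R : Type*} [Fintype ι] [DecidableEq ι] [Field R] [LinearOrder R]
  [IsStrictOrderedRing R] {M : Matrix ι ι R} {γ : R}

lemma le_mulVec_of_mem_rowStochastic (hM : M ∈ rowStochastic R ι) {u : ι → R} {c : R}
    (hc : ∀ j, c ≤ u j) (i : ι) : c ≤ (M *ᵥ u) i :=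
  calc c = ∑ j, M i j * c := by rw [← Finset.sum_mul, sum_row_of_mem_rowStochastic hM, one_mul]
    _ ≤ ∑ j, M i j * u j :=
      Finset.sum_le_sum fun j _ => mul_le_mul_of_nonneg_left (hc j) (nonneg_of_mem_rowStochastic hM)

lemma nonneg_of_smul_mulVec_le (hM : M ∈ rowStochastic R ι) (hγ0 : 0 ≤ γ) (hγ1 : γ < 1)
    {u : ι → R} (h : γ • M *ᵥ u ≤ u) : 0 ≤ u := by
  intro i
  obtain ⟨k, -, hk⟩ := Finset.exists_min_image Finset.univ u ⟨i, Finset.mem_univ i⟩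
  have hmin : ∀ j, u k ≤ u j := fun j => hk j (Finset.mem_univ j)
  have hγk : γ * u k ≤ u k :=
    calc γ * u k ≤ γ * (M *ᵥ u) k :=
          mul_le_mul_of_nonneg_left (le_mulVec_of_mem_rowStochastic hM hmin k) hγ0
      _ ≤ u k := h k
  have : 0 ≤ u k := by nlinarith
  exact this.trans (hmin i)

lemma isUnit_one_sub_smul_of_mem_rowStochastic (hM : M ∈ rowStochastic R ι) (hγ0 : 0 ≤ γ)
    (hγ1 : γ < 1) : IsUnit (1 - γ • M) := by
  rw [← mulVec_injective_iff_isUnit]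
  refine (injective_iff_map_eq_zero (mulVecLin (1 - γ • M))).mpr fun z hz => ?_
  rw [mulVecLin_apply, sub_mulVec, one_mulVec, smul_mulVec, sub_eq_zero] at hz
  have hz_nonneg : 0 ≤ z := nonneg_of_smul_mulVec_le hM hγ0 hγ1 hz.symm.le
  have hz_nonpos : 0 ≤ -z :=
    nonneg_of_smul_mulVec_le hM hγ0 hγ1 (by rw [mulVec_neg, smul_neg, ← hz])
  exact le_antisymm (neg_nonneg.mp hz_nonpos) hz_nonneg

lemma inv_mulVec_eq_add_smul_mulVec (hM : M ∈ rowStochastic R ι) (hγ0 : 0 ≤ γ) (hγ1 : γ < 1)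
    (r : ι → R) : (1 - γ • M)⁻¹ *ᵥ r = r + γ • M *ᵥ ((1 - γ • M)⁻¹ *ᵥ r) := by
  have hdet := (isUnit_iff_isUnit_det _).mp (isUnit_one_sub_smul_of_mem_rowStochastic hM hγ0 hγ1)
  have hfix : (1 - γ • M) *ᵥ ((1 - γ • M)⁻¹ *ᵥ r) = r := by
    rw [mulVec_mulVec, mul_nonsing_inv _ hdet, one_mulVec]
  rw [sub_mulVec, one_mulVec, smul_mulVec] at hfix
  exact sub_eq_iff_eq_add.mp hfix

lemma le_inv_mulVec_of_le_add_smul_mulVec (hM : M ∈ rowStochastic R ι) (hγ0 : 0 ≤ γ)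
    (hγ1 : γ < 1) {r v : ι → R} (hv : v ≤ r + γ • M *ᵥ v) : v ≤ (1 - γ • M)⁻¹ *ᵥ r := by
  set w := (1 - γ • M)⁻¹ *ᵥ r
  have hw : w = r + γ • M *ᵥ w := inv_mulVec_eq_add_smul_mulVec hM hγ0 hγ1 r
  have hdiff : γ • M *ᵥ (w - v) ≤ w - v := by
    intro i
    have hvi := hv i
    have hwi := congrFun hw i
    simp only [mulVec_sub, smul_sub, Pi.sub_apply, Pi.add_apply] at hvi hwi ⊢
    linarith
  exact sub_nonneg.mp (nonneg_of_smul_mulVec_le hM hγ0 hγ1 hdiff)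

end Matrix

theorem policy_improvement_general
    {n : ℕ} (P' : Matrix (Fin n) (Fin n) ℝ)
    (hP'_nonneg : ∀ i j, 0 ≤ P' i j) (hP'_row : ∀ i, ∑ j, P' i j = 1)
    (γ : ℝ) (hγ0 : 0 ≤ γ) (hγ1 : γ < 1) (r : Fin n → ℝ)
    (v : Fin n → ℝ)
    (himp : v ≤ r + γ • P'.mulVec v) :
    v ≤ (1 - γ • P')⁻¹.mulVec r :=
  le_inv_mulVec_of_le_add_smul_mulVec (mem_rowStochastic_iff_sum.mpr ⟨hP'_nonneg, hP'_row⟩)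
    hγ0 hγ1 himp

/-- Policy improvement: if `v = (I − γP)⁻¹ r` is the value of a policy with transition
matrix `P`, and another policy with transition matrix `P'` is greedy-improving, i.e.
`r + γ P' v ≥ v` componentwise, then its value dominates: `(I − γP')⁻¹ r ≥ v`. -/
theorem policy_improvement
    {n : ℕ} (P P' : Matrix (Fin n) (Fin n) ℝ)
    (hP_nonneg : ∀ i j, 0 ≤ P i j) (hP_row : ∀ i, ∑ j, P i j = 1)
    (hP'_nonneg : ∀ i j, 0 ≤ P' i j) (hP'_row : ∀ i, ∑ j, P' i j = 1)
    (γ : ℝ) (hγ0 : 0 ≤ γ) (hγ1 : γ < 1) (r : Fin n → ℝ)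
    (v : Fin n → ℝ) (hv : v = (1 - γ • P)⁻¹.mulVec r)
    (himp : v ≤ r + γ • P'.mulVec v) :
    v ≤ (1 - γ • P')⁻¹.mulVec r :=
  policy_improvement_general P' hP'_nonneg hP'_row γ hγ0 hγ1 r v himp
end

section
/- Equivalence of evidence from decision mappings and decision trajectories: let S and A be types, let t ≥ 1, and let s : {1,…,t} → S and a : {1,…,t} → A be observed states and actions. Let ps : S → ℝ, pt : S → A → S → ℝ, and, for an arbitrary type R of reward parameters, q : S → A → R → ℝ. Define L₁(r) = ∏_{h=1}^{t} ps(s_h) · q(s_h, a_h, r) and L₂(r) = ps(s_1) · q(s_1, a_1, r) · ∏_{h=2}^{t} pt(s_{h-1}, a_{h-1}, s_h) · q(s_h, a_h, r). If ps(s_h) > 0 for all h and pt(s_{h-1}, a_{h-1}, s_h) > 0 for all h ≥ 2, then there exists a constant c > 0, not depending on r, such that L₁(r) = c · L₂(r) for all r ∈ R. -/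
/-!
The two likelihoods differ only in the `r`-independent weight attached to each step `h ≥ 2`:
the state marginal `ps (s h)` in one, the transition probability `pt (s (h-1)) (a (h-1)) (s h)`
in the other. Trading one weight for the other rescales the product by the ratio of the weight
products, which is positive and does not involve `r`.
-/

theorem Finset.prod_mul_eq_div_mul_prod_mul {ι K : Type*} [CommGroupWithZero K]
    (s : Finset ι) (u v f : ι → K) (hv : ∀ i ∈ s, v i ≠ 0) :
    ∏ i ∈ s, u i * f i = (∏ i ∈ s, u i) / (∏ i ∈ s, v i) * ∏ i ∈ s, v i * f i := by
  rw [prod_mul_distrib, prod_mul_distrib, div_mul_eq_mul_div, mul_div_assoc,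
    mul_div_cancel_left₀ _ (prod_ne_zero_iff.mpr hv)]

/-- Equivalence of evidence between the decision-mapping experiment (likelihood `L₁`)
and the decision-trajectory experiment (likelihood `L₂`): if all state marginals and
Markov transition probabilities appearing in the trajectory are positive, then
`L₁(r) = c · L₂(r)` for a constant `c > 0` not depending on the reward parameter `r`. -/
theorem decision_mapping_trajectory_evidence_equivalence
    {S A R : Type*} (t : ℕ) (ht : 1 ≤ t)
    (s : ℕ → S) (a : ℕ → A)
    (ps : S → ℝ) (pt : S → A → S → ℝ) (q : S → A → R → ℝ)
    (hps : ∀ h ∈ Finset.Icc 1 t, 0 < ps (s h))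
    (hpt : ∀ h ∈ Finset.Icc 2 t, 0 < pt (s (h - 1)) (a (h - 1)) (s h)) :
    ∃ c : ℝ, 0 < c ∧ ∀ r : R,
      (∏ h ∈ Finset.Icc 1 t, ps (s h) * q (s h) (a h) r) =
        c * (ps (s 1) * q (s 1) (a 1) r *
          ∏ h ∈ Finset.Icc 2 t, pt (s (h - 1)) (a (h - 1)) (s h) * q (s h) (a h) r) := by
  have hIcc : Finset.Icc 2 t ⊆ Finset.Icc 1 t := Finset.Icc_subset_Icc_left one_le_two
  refine ⟨(∏ h ∈ Finset.Icc 2 t, ps (s h)) /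
      ∏ h ∈ Finset.Icc 2 t, pt (s (h - 1)) (a (h - 1)) (s h),
    div_pos (Finset.prod_pos fun h hh => hps h (hIcc hh)) (Finset.prod_pos hpt), fun r => ?_⟩
  have hsplit : insert 1 (Finset.Icc 2 t) = Finset.Icc 1 t :=
    Finset.insert_Icc_add_one_left_eq_Icc ht
  rw [← hsplit, Finset.prod_insert (by simp),
    Finset.prod_mul_eq_div_mul_prod_mul _ (fun h => ps (s h))
      (fun h => pt (s (h - 1)) (a (h - 1)) (s h)) _ fun h hh => (hpt h hh).ne']
  ring
end
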